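/- Let r₁ = 5/11 + 1/(22π) and r₂ = 5/11 − 1/(220π), and let f = f_{r₁,r₂} be the associated eight-interval exchange transformation of [−1, 1). Then f satisfies the modified Keane condition: for every integer m ≥ 1 and all p, p' in the set P = {−1, r₁−r₂−1, r₁−r₂−1/2, −r₁, 0, r₁−r₂, r₁−r₂+1/2, 1−r₁} of left endpoints with p' ∉ {−1, 0}, one has f^m(p) ≠ p'. -/
import Mathlib

/-- The eight-interval exchange transformation of `[−1, 1)` associated with the rotation
numbers `r₁`, `r₂` (case `1/4 + r₂/2 − r₁ > 0`), encoding the billiard dynamics in a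
domain bounded by two confocal ellipses and two segments on their smaller axis. -/
noncomputable def fIET (r1 r2 : ℝ) (ξ : ℝ) : ℝ :=
  if ξ < r1 - r2 - 1 then ξ + r1 + 3 / 2
  else if ξ < r1 - r2 - 1 / 2 then ξ + r2
  else if ξ < -r1 then ξ + r1
  else if ξ < 0 then ξ + r1 - 1
  else if ξ < r1 - r2 then ξ + r1 - 1 / 2
  else if ξ < r1 - r2 + 1 / 2 then ξ + r2
  else if ξ < 1 - r1 then ξ + r1
  else ξ + r1 - 1

/-- One step of the IET preserves the lattice `ℤ/2 + ℤ r₁ + ℤ r₂`, adds exactly one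
`r₁` or `r₂`, and never decreases `k + 2a`. -/
lemma fIET_step_rep (r1 r2 : ℝ) (k a b : ℤ) :
    ∃ k2 a2 : ℤ, fIET r1 r2 ((k:ℝ)/2 + (a:ℝ)*r1 + (b:ℝ)*r2)
      = (k2:ℝ)/2 + (a2:ℝ)*r1 + ((a+b+1-a2 : ℤ):ℝ)*r2
      ∧ (a2 = a ∨ a2 = a + 1) ∧ k + 2*a ≤ k2 + 2*a2 := by
  unfold fIET
  split_ifs
  · exact ⟨k+3, a+1, by push_cast; ring, Or.inr rfl, by omega⟩
  · exact ⟨k, a, by push_cast; ring, Or.inl rfl, by omega⟩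
  · exact ⟨k, a+1, by push_cast; ring, Or.inr rfl, by omega⟩
  · exact ⟨k-2, a+1, by push_cast; ring, Or.inr rfl, by omega⟩
  · exact ⟨k-1, a+1, by push_cast; ring, Or.inr rfl, by omega⟩
  · exact ⟨k, a, by push_cast; ring, Or.inl rfl, by omega⟩
  · exact ⟨k, a+1, by push_cast; ring, Or.inr rfl, by omega⟩
  · exact ⟨k-2, a+1, by push_cast; ring, Or.inr rfl, by omega⟩

/-- Iterating the IET `m` times from a lattice point: `a + b` grows by exactly `m`,
`a` grows by at most `m`, and `k + 2a` never decreases. -/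
lemma fIET_orbit_rep (r1 r2 : ℝ) (m : ℕ) (k a b : ℤ) :
    ∃ k2 a2 b2 : ℤ, (fIET r1 r2)^[m] ((k:ℝ)/2 + (a:ℝ)*r1 + (b:ℝ)*r2)
      = (k2:ℝ)/2 + (a2:ℝ)*r1 + (b2:ℝ)*r2
      ∧ a2 + b2 = a + b + m ∧ a ≤ a2 ∧ a2 ≤ a + m ∧ k + 2*a ≤ k2 + 2*a2 := by
  induction m with
  | zero => exact ⟨k, a, b, by simp, by simp, le_refl _, by simp, le_refl _⟩
  | succ n ih =>
    obtain ⟨k2, a2, b2, he, h1, h2, h3, h4⟩ := ih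
    obtain ⟨k3, a3, he2, h5, h6⟩ := fIET_step_rep r1 r2 k2 a2 b2
    refine ⟨k3, a3, a2+b2+1-a3, ?_, by omega, by omega, by omega, by omega⟩
    rw [Function.iterate_succ_apply', he, he2]

lemma pi_int_lin (c d : ℤ) (h : (c:ℝ) * Real.pi = d) : c = 0 ∧ d = 0 := by
  by_cases hc : c = 0
  · subst hc
    simp only [Int.cast_zero, zero_mul] at h
    exact ⟨rfl, by exact_mod_cast h.symm⟩
  · exfalso
    have hc' : (c:ℝ) ≠ 0 := Int.cast_ne_zero.mpr hc
    have : Real.pi = ((d / c : ℚ) : ℝ) := by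
      push_cast
      field_simp
      linarith
    exact irrational_pi ⟨(d / c : ℚ), this.symm⟩

/-- Independence of `1, r₁, r₂` over ℚ for the specific parameters. -/
lemma indep_rep (k a b : ℤ)
    (h : (k:ℝ)/2 + (a:ℝ)*(5/11 + 1/(22*Real.pi)) + (b:ℝ)*(5/11 - 1/(220*Real.pi)) = 0) :
    b = 10*a ∧ k = -10*a := by
  have hπ : Real.pi ≠ 0 := Real.pi_ne_zero
  have h2 : ((110*k + 100*a + 100*b : ℤ) : ℝ) * Real.pi = ((b - 10*a : ℤ) : ℝ) := by
    push_cast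
    field_simp at h
    nlinarith [h, Real.pi_pos]
  obtain ⟨h3, h4⟩ := pi_int_lin _ _ h2
  constructor <;> omega

theorem fIET_modifiedKeane_example :
    let r1 : ℝ := 5 / 11 + 1 / (22 * Real.pi)
    let r2 : ℝ := 5 / 11 - 1 / (220 * Real.pi)
    let P : Set ℝ := {-1, r1 - r2 - 1, r1 - r2 - 1 / 2, -r1, 0, r1 - r2,
      r1 - r2 + 1 / 2, 1 - r1}
    ∀ m : ℕ, 1 ≤ m → ∀ p ∈ P, ∀ p' ∈ P, p' ≠ -1 → p' ≠ 0 →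
      (fIET r1 r2)^[m] p ≠ p' := by
  intro r1 r2 P m hm p hp p' hp' h1 h0 heq
  have hr1 : r1 = 5/11 + 1/(22*Real.pi) := rfl
  have hr2 : r2 = 5/11 - 1/(220*Real.pi) := rfl
  simp only [P, Set.mem_insert_iff, Set.mem_singleton_iff] at hp hp'
  -- representation of the starting point
  obtain ⟨k0, a0, b0, hrep, hf1, hf2, hf3, hf4⟩ :
      ∃ k0 a0 b0 : ℤ, p = (k0:ℝ)/2 + (a0:ℝ)*r1 + (b0:ℝ)*r2 ∧
        -1 ≤ a0 + b0 ∧ a0 + b0 ≤ 0 ∧ -2 ≤ k0 + 2*a0 ∧ (a0 + b0 = -1 → a0 = -1) := by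
    rcases hp with rfl|rfl|rfl|rfl|rfl|rfl|rfl|rfl
    · exact ⟨-2, 0, 0, by push_cast; ring, by omega, by omega, by omega, by omega⟩
    · exact ⟨-2, 1, -1, by push_cast; ring, by omega, by omega, by omega, by omega⟩
    · exact ⟨-1, 1, -1, by push_cast; ring, by omega, by omega, by omega, by omega⟩
    · exact ⟨0, -1, 0, by push_cast; ring, by omega, by omega, by omega, by omega⟩
    · exact ⟨0, 0, 0, by push_cast; ring, by omega, by omega, by omega, by omega⟩
    · exact ⟨0, 1, -1, by push_cast; ring, by omega, by omega, by omega, by omega⟩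
    · exact ⟨1, 1, -1, by push_cast; ring, by omega, by omega, by omega, by omega⟩
    · exact ⟨2, -1, 0, by push_cast; ring, by omega, by omega, by omega, by omega⟩
  -- representation of the target point
  obtain ⟨k', a', b', hrep', hg1, hg2, hg3⟩ :
      ∃ k' a' b' : ℤ, p' = (k':ℝ)/2 + (a':ℝ)*r1 + (b':ℝ)*r2 ∧
        a' + b' ≤ 0 ∧ k' + 2*a' ≤ 3 ∧ (a' + b' = 0 → a' = 1) := by
    rcases hp' with rfl|rfl|rfl|rfl|rfl|rfl|rfl|rfl
    · exact absurd rfl h1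
    · exact ⟨-2, 1, -1, by push_cast; ring, by omega, by omega, by omega⟩
    · exact ⟨-1, 1, -1, by push_cast; ring, by omega, by omega, by omega⟩
    · exact ⟨0, -1, 0, by push_cast; ring, by omega, by omega, by omega⟩
    · exact absurd rfl h0
    · exact ⟨0, 1, -1, by push_cast; ring, by omega, by omega, by omega⟩
    · exact ⟨1, 1, -1, by push_cast; ring, by omega, by omega, by omega⟩
    · exact ⟨2, -1, 0, by push_cast; ring, by omega, by omega, by omega⟩
  obtain ⟨k2, a2, b2, he, ho1, ho2, ho3, ho4⟩ := fIET_orbit_rep r1 r2 m k0 a0 b0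
  rw [hrep, he, hrep'] at heq
  have hz : ((k2 - k' : ℤ):ℝ)/2 + ((a2 - a' : ℤ):ℝ)*(5/11 + 1/(22*Real.pi))
      + ((b2 - b' : ℤ):ℝ)*(5/11 - 1/(220*Real.pi)) = 0 := by
    rw [hr1, hr2] at heq
    push_cast
    linarith [heq]
  obtain ⟨hb, hk⟩ := indep_rep _ _ _ hz
  omega
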